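/- For a, b > 0, ∫₀^∞ erf(ax)·e^{−b²x²} dx = (π/2 − arctan(b/a)) / (b√π). -/

import Mathlib

open MeasureTheory Real Set

/-- The Gauss error function `erf x = (2/√π) ∫₀ˣ e^{−t²} dt`. -/
noncomputable def erf (x : ℝ) : ℝ :=
  (2 / Real.sqrt Real.pi) * ∫ t in (0:ℝ)..x, Real.exp (-(t^2))

/-!
Substituting `t = a x s` gives `erf (a x) = (2 a x / √π) ∫₀¹ e^{-a²x²s²} ds`, so the integral becomes
`(2a/√π) ∫₀^∞ ∫₀¹ x e^{-(a²s² + b²)x²} ds dx`. After exchanging the integrals (the integrand is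
dominated by `|x| e^{-b²x²}`), the inner integral is `1 / (2(a²s² + b²))`, and
`∫₀¹ ds / (a²s² + b²) = arctan (a/b) / (ab)`, where `arctan (a/b) = π/2 - arctan (b/a)`.
-/

theorem integral_Ioi_mul_exp_neg_mul_sq {c : ℝ} (hc : 0 < c) :
    ∫ x in Ioi (0:ℝ), x * exp (-c * x ^ 2) = (2 * c)⁻¹ := by
  apply Complex.ofReal_injective
  rw [← integral_complex_ofReal]
  push_cast
  exact integral_mul_cexp_neg_mul_sq (by simpa using hc)

theorem erf_eq_mul_intervalIntegral_zero_one (y : ℝ) :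
    erf y = 2 / √π * y * ∫ s in (0:ℝ)..1, exp (-(y * s) ^ 2) := by
  have h := intervalIntegral.smul_integral_comp_mul_left (a := 0) (b := 1)
    (fun t => exp (-t ^ 2)) y
  rw [mul_zero, mul_one, smul_eq_mul] at h
  rw [erf, mul_assoc, h]

theorem erf_mul_mul_exp_neg_mul_sq_eq_integral (a b x : ℝ) :
    erf (a * x) * exp (-b ^ 2 * x ^ 2)
      = 2 * a / √π * ∫ s in Ioc (0:ℝ) 1, x * exp (-(a ^ 2 * s ^ 2 + b ^ 2) * x ^ 2) := by
  have h_exp : ∀ s, x * exp (-(a ^ 2 * s ^ 2 + b ^ 2) * x ^ 2)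
      = x * (exp (-(a * x * s) ^ 2) * exp (-b ^ 2 * x ^ 2)) := fun s => by
    rw [← exp_add]
    ring_nf
  simp_rw [h_exp, ← intervalIntegral.integral_of_le zero_le_one,
    intervalIntegral.integral_const_mul, intervalIntegral.integral_mul_const,
    erf_eq_mul_intervalIntegral_zero_one]
  ring

theorem integrable_mul_exp_neg_mul_sq_prod (a : ℝ) {b : ℝ} (hb : 0 < b) (s : Set ℝ)
    (ν : Measure ℝ) [IsFiniteMeasure ν] :
    Integrable (fun p : ℝ × ℝ => p.1 * exp (-(a ^ 2 * p.2 ^ 2 + b ^ 2) * p.1 ^ 2))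
      ((volume.restrict s).prod ν) := by
  refine ((integrable_mul_exp_neg_mul_sq (sq_pos_of_pos hb)).integrableOn.comp_fst ν).norm.mono'
    (by fun_prop) (Filter.Eventually.of_forall fun p => ?_)
  simp only [norm_mul, norm_of_nonneg (exp_pos _).le]
  gcongr
  nlinarith [sq_nonneg (a * p.2 * p.1), sq_nonneg p.1]

theorem integral_inv_mul_sq_add_sq {a b : ℝ} (ha : a ≠ 0) (hb : b ≠ 0) (t : ℝ) :
    ∫ s in (0:ℝ)..t, (a ^ 2 * s ^ 2 + b ^ 2)⁻¹ = arctan (a * t / b) / (a * b) := by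
  have h_inv : ∀ s, (a ^ 2 * s ^ 2 + b ^ 2)⁻¹ = (b ^ 2)⁻¹ * (1 + (a / b * s) ^ 2)⁻¹ :=
    fun s => by
      field_simp
      ring
  simp_rw [h_inv, intervalIntegral.integral_const_mul,
    intervalIntegral.integral_comp_mul_left (fun s => (1 + s ^ 2)⁻¹) (div_ne_zero ha hb),
    integral_inv_one_add_sq]
  simp only [smul_eq_mul, mul_zero, arctan_zero, sub_zero]
  field_simp

/-- The integral identity `∫₀^∞ erf(ax) e^{−b²x²} dx = (π/2 − arctan(b/a))/(b√π)`
for `a, b > 0`. -/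
theorem integral_erf_mul_gaussian
    (a b : ℝ) (ha : 0 < a) (hb : 0 < b) :
    ∫ x in Ioi (0:ℝ), erf (a * x) * Real.exp (-(b^2) * x^2)
      = (Real.pi / 2 - Real.arctan (b / a)) / (b * Real.sqrt Real.pi) := by
  calc ∫ x in Ioi (0:ℝ), erf (a * x) * exp (-(b ^ 2) * x ^ 2)
      = 2 * a / √π *
          ∫ x in Ioi 0, ∫ s in Ioc 0 1, x * exp (-(a ^ 2 * s ^ 2 + b ^ 2) * x ^ 2) := by
        simp_rw [erf_mul_mul_exp_neg_mul_sq_eq_integral]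
        exact integral_const_mul _ _
    _ = 2 * a / √π * ∫ s in Ioc 0 1, (2 * (a ^ 2 * s ^ 2 + b ^ 2))⁻¹ := by
        rw [integral_integral_swap (integrable_mul_exp_neg_mul_sq_prod a hb _ _)]
        congr 1
        exact integral_congr_ae (Filter.Eventually.of_forall fun s =>
          integral_Ioi_mul_exp_neg_mul_sq (by positivity))
    _ = 2 * a / √π * (arctan (a / b) / (2 * (a * b))) := by
        simp_rw [mul_inv, integral_const_mul, ← intervalIntegral.integral_of_le zero_le_one,
          integral_inv_mul_sq_add_sq ha.ne' hb.ne', mul_one]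
        ring
    _ = (π / 2 - arctan (b / a)) / (b * √π) := by
        rw [← inv_div b a, arctan_inv_of_pos (div_pos hb ha)]
        field_simp
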